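/- Let R be a commutative ring and A an augmented R-algebra. Let B₁ → A and B₂ → A be versal small deformations of A such that each kernel ker(B_i → A) is a finitely generated ideal of B_i. Then there exists a versal small deformation C → A together with surjections of augmented R-algebras C → B₁ and C → B₂ that are compatible with the given maps to A. -/

import Mathlib

/-!
Let `T = B₁ ⊗_R B₂`, with augmentation ideal `I` and `K` the kernel of `T → A`. The quotient
`C = T / (I · K)` is the coproduct of `B₁` and `B₂` among small deformations of `A`. Since
`B₁ ⊗_R B₂` and `A = B₁ / ker(B₁ → A)` are finitely presented, `I` and `K` are finitely
generated and `C` is finitely presented. A versal deformation lifts along every surjection of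
small deformations (take a section of the pullback), so the coproduct of two versal
deformations is versal. Versality of `B₂` gives a map `B₂ → B₁` over `A`; together with the
identity of `B₁` it induces a surjection `C → B₁`, and symmetrically `C → B₂`.
-/

/-- An augmented `R`-algebra: a commutative `R`-algebra together with an `R`-algebra
homomorphism to `R` (the augmentation). -/
structure AugAlg (R : Type) [CommRing R] where
  carrier : Type
  [ring : CommRing carrier]
  [alg : Algebra R carrier]
  aug : carrier →ₐ[R] R

attribute [instance] AugAlg.ring AugAlg.alg

variable {R : Type} [CommRing R]

/-- A small deformation of an augmented `R`-algebra `A`: a surjection `π : B → A` of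
augmented `R`-algebras such that `I_B · ker π = 0`. -/
structure SmallDef (A : AugAlg R) where
  B : AugAlg R
  π : B.carrier →ₐ[R] A.carrier
  surj : Function.Surjective π
  aug_comp : A.aug.comp π = B.aug
  small : ∀ b ∈ RingHom.ker B.aug, ∀ x ∈ RingHom.ker π, b * x = 0

/-- Versality of a small deformation `D` of `A`: `D.B` is a finitely presented
`R`-algebra and `D.π` is projective among small deformations: every surjection
`C → D.B` of small deformations of `A` admits a section of augmented `R`-algebras
compatible with the maps to `A`. -/
def SmallDef.IsVersal {A : AugAlg R} (D : SmallDef A) : Prop :=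
  Algebra.FinitePresentation R D.B.carrier ∧
    ∀ (C : SmallDef A) (q : C.B.carrier →ₐ[R] D.B.carrier),
      Function.Surjective q → D.π.comp q = C.π → D.B.aug.comp q = C.B.aug →
        ∃ s : D.B.carrier →ₐ[R] C.B.carrier,
          q.comp s = AlgHom.id R D.B.carrier ∧ C.π.comp s = D.π ∧
            C.B.aug.comp s = D.B.aug

open scoped TensorProduct
open Algebra.TensorProduct (productMap includeLeft includeRight)

namespace SmallDef

variable {A : AugAlg R}

theorem aug_apply (D : SmallDef A) (b : D.B.carrier) : D.B.aug b = A.aug (D.π b) :=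
  (AlgHom.congr_fun D.aug_comp b).symm

theorem aug_comp_eq_of_π_comp_eq {D E : SmallDef A} {f : D.B.carrier →ₐ[R] E.B.carrier}
    (hf : E.π.comp f = D.π) : E.B.aug.comp f = D.B.aug := by
  rw [← E.aug_comp, AlgHom.comp_assoc, hf, D.aug_comp]

def refl (A : AugAlg R) : SmallDef A where
  B := A
  π := AlgHom.id R A.carrier
  surj := Function.surjective_id
  aug_comp := AlgHom.comp_id _
  small _ _ x hx := by rw [show x = 0 from RingHom.mem_ker.mp hx, mul_zero]

section Pullback

variable {C D E : SmallDef A} (w : E.B.carrier →ₐ[R] C.B.carrier)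
  (f : D.B.carrier →ₐ[R] C.B.carrier)

abbrev pullbackAlgebra : Subalgebra R (E.B.carrier × D.B.carrier) :=
  AlgHom.equalizer (w.comp (AlgHom.fst R _ _)) (f.comp (AlgHom.snd R _ _))

abbrev pullbackSnd : pullbackAlgebra w f →ₐ[R] D.B.carrier :=
  (AlgHom.snd R _ _).comp (pullbackAlgebra w f).val

theorem pullbackAlgebra.π_fst_eq_π_snd (hwπ : C.π.comp w = E.π) (hfπ : C.π.comp f = D.π)
    (s : pullbackAlgebra w f) : E.π s.1.1 = D.π s.1.2 := by
  rw [← hwπ, ← hfπ, AlgHom.comp_apply, AlgHom.comp_apply, show w s.1.1 = f s.1.2 from s.2]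

theorem pullbackSnd_surjective (hw : Function.Surjective w) :
    Function.Surjective (pullbackSnd w f) := fun d =>
  let ⟨e, he⟩ := hw (f d)
  ⟨⟨(e, d), he⟩, rfl⟩

def pullback (hw : Function.Surjective w) (hwπ : C.π.comp w = E.π)
    (hfπ : C.π.comp f = D.π) : SmallDef A where
  B := { carrier := pullbackAlgebra w f, aug := A.aug.comp (D.π.comp (pullbackSnd w f)) }
  π := D.π.comp (pullbackSnd w f)
  surj := D.surj.comp (pullbackSnd_surjective w f hw)
  aug_comp := rfl
  small b hb x hx := by
    have hb : A.aug (D.π b.1.2) = 0 := hb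
    have hx : D.π x.1.2 = 0 := hx
    have hfst := pullbackAlgebra.π_fst_eq_π_snd w f hwπ hfπ
    refine Subtype.ext (Prod.ext (E.small _ ?_ _ ?_) (D.small _ ?_ _ hx))
    · rw [RingHom.mem_ker, aug_apply, hfst, hb]
    · rw [RingHom.mem_ker, hfst, hx]
    · rw [RingHom.mem_ker, aug_apply, hb]

end Pullback

/-- A section of the pullback of `w` along `f` gives a lift of `f` along `w`. -/
theorem IsVersal.exists_lift {D : SmallDef A} (hD : D.IsVersal) {C E : SmallDef A}
    (w : E.B.carrier →ₐ[R] C.B.carrier) (hw : Function.Surjective w) (hwπ : C.π.comp w = E.π)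
    (f : D.B.carrier →ₐ[R] C.B.carrier) (hfπ : C.π.comp f = D.π) :
    ∃ t : D.B.carrier →ₐ[R] E.B.carrier, w.comp t = f ∧ E.π.comp t = D.π := by
  obtain ⟨s, hs, -, -⟩ := hD.2 (pullback w f hw hwπ hfπ) (pullbackSnd w f)
    (pullbackSnd_surjective w f hw) rfl (aug_comp_eq_of_π_comp_eq rfl)
  have hwt : w.comp (((AlgHom.fst R _ _).comp (pullbackAlgebra w f).val).comp s) = f :=
    AlgHom.ext fun d => by
      show w (s d).1.1 = f d
      exact ((s d).2 : w (s d).1.1 = f (s d).1.2).trans (congrArg f (AlgHom.congr_fun hs d))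
  exact ⟨_, hwt, by rw [← hwπ, AlgHom.comp_assoc, hwt, hfπ]⟩

theorem IsVersal.exists_hom {D : SmallDef A} (hD : D.IsVersal) (E : SmallDef A) :
    ∃ f : D.B.carrier →ₐ[R] E.B.carrier, E.π.comp f = D.π := by
  obtain ⟨f, -, hf⟩ := hD.exists_lift (C := refl A) E.π E.surj (AlgHom.id_comp _) D.π
    (AlgHom.id_comp _)
  exact ⟨f, hf⟩

section OfSurjective

variable {T : Type} [CommRing T] [Algebra R T] (μ : T →ₐ[R] A.carrier)

def smallnessIdeal : Ideal T := RingHom.ker (A.aug.comp μ) * RingHom.ker μ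

def ofSurjectiveπ : (T ⧸ smallnessIdeal μ) →ₐ[R] A.carrier :=
  Ideal.Quotient.liftₐ _ μ fun _ ha => Ideal.mul_le_right ha

/-- The largest quotient of `T` that is a small deformation of `A` through `μ`. -/
def ofSurjective (hμ : Function.Surjective μ) : SmallDef A where
  B := { carrier := T ⧸ smallnessIdeal μ, aug := A.aug.comp (ofSurjectiveπ μ) }
  π := ofSurjectiveπ μ
  surj := Function.Surjective.of_comp (g := Ideal.Quotient.mk _) hμ
  aug_comp := rfl
  small b hb x hx := by
    obtain ⟨b, rfl⟩ := Ideal.Quotient.mk_surjective b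
    obtain ⟨x, rfl⟩ := Ideal.Quotient.mk_surjective x
    rw [← map_mul, Ideal.Quotient.eq_zero_iff_mem]
    exact Ideal.mul_mem_mul hb hx

variable {μ} {hμ : Function.Surjective μ}

def ofSurjective.mk : T →ₐ[R] (ofSurjective μ hμ).B.carrier := Ideal.Quotient.mkₐ R _

theorem ofSurjective.hom_ext {X : Type} [CommRing X] [Algebra R X]
    {g g' : (ofSurjective μ hμ).B.carrier →ₐ[R] X}
    (h : g.comp ofSurjective.mk = g'.comp ofSurjective.mk) : g = g' :=
  Ideal.Quotient.algHom_ext R h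

theorem smallnessIdeal_le_ker {E : SmallDef A} {g : T →ₐ[R] E.B.carrier} (hg : E.π.comp g = μ) :
    smallnessIdeal μ ≤ RingHom.ker g := by
  refine Ideal.mul_le.mpr fun i hi j hj => ?_
  rw [RingHom.mem_ker, map_mul]
  refine E.small _ ?_ _ ?_
  · rw [RingHom.mem_ker, aug_apply, ← AlgHom.comp_apply E.π, hg]
    exact hi
  · rw [RingHom.mem_ker, ← AlgHom.comp_apply, hg]
    exact hj

def ofSurjective.lift {E : SmallDef A} (g : T →ₐ[R] E.B.carrier) (hg : E.π.comp g = μ) :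
    (ofSurjective μ hμ).B.carrier →ₐ[R] E.B.carrier :=
  Ideal.Quotient.liftₐ _ g fun _ ha => smallnessIdeal_le_ker hg ha

theorem ofSurjective.lift_comp_mk {E : SmallDef A} (g : T →ₐ[R] E.B.carrier)
    (hg : E.π.comp g = μ) : (ofSurjective.lift (hμ := hμ) g hg).comp ofSurjective.mk = g :=
  Ideal.Quotient.liftₐ_comp _ _ _

theorem ofSurjective.π_comp_lift {E : SmallDef A} (g : T →ₐ[R] E.B.carrier)
    (hg : E.π.comp g = μ) :
    E.π.comp (ofSurjective.lift (hμ := hμ) g hg) = (ofSurjective μ hμ).π :=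
  ofSurjective.hom_ext (by rw [AlgHom.comp_assoc, ofSurjective.lift_comp_mk, hg]; rfl)

theorem ofSurjective_finitePresentation (hμ : Function.Surjective μ)
    [Algebra.FinitePresentation R T] [Algebra.FinitePresentation R A.carrier] :
    Algebra.FinitePresentation R (ofSurjective μ hμ).B.carrier := by
  have haug : Function.Surjective A.aug := fun r => ⟨algebraMap R A.carrier r, A.aug.commutes r⟩
  exact Algebra.FinitePresentation.quotient <| Submodule.FG.mul
    (Algebra.FinitePresentation.ker_fG_of_surjective (A.aug.comp μ) (haug.comp hμ))
    (Algebra.FinitePresentation.ker_fG_of_surjective _ hμ)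

end OfSurjective

section Coprod

variable (D₁ D₂ : SmallDef A)

theorem productMap_π_surjective : Function.Surjective (productMap D₁.π D₂.π) := fun a =>
  let ⟨b, hb⟩ := D₁.surj a
  ⟨b ⊗ₜ 1, by rw [Algebra.TensorProduct.productMap_apply_tmul, map_one, mul_one, hb]⟩

/-- The coproduct of `D₁` and `D₂` among small deformations of `A`. -/
def coprod : SmallDef A := ofSurjective _ (productMap_π_surjective D₁ D₂)

def coprod.inl : D₁.B.carrier →ₐ[R] (coprod D₁ D₂).B.carrier :=
  ofSurjective.mk.comp includeLeft

def coprod.inr : D₂.B.carrier →ₐ[R] (coprod D₁ D₂).B.carrier :=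
  ofSurjective.mk.comp includeRight

theorem coprod.π_comp_inl : (coprod D₁ D₂).π.comp (coprod.inl D₁ D₂) = D₁.π :=
  AlgHom.ext (AlgHom.congr_fun (Algebra.TensorProduct.productMap_left D₁.π D₂.π))

theorem coprod.π_comp_inr : (coprod D₁ D₂).π.comp (coprod.inr D₁ D₂) = D₂.π :=
  AlgHom.ext (AlgHom.congr_fun (Algebra.TensorProduct.productMap_right D₁.π D₂.π))

variable {D₁ D₂}

theorem coprod.hom_ext {X : Type} [CommRing X] [Algebra R X]
    {g g' : (coprod D₁ D₂).B.carrier →ₐ[R] X}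
    (h₁ : g.comp (coprod.inl D₁ D₂) = g'.comp (coprod.inl D₁ D₂))
    (h₂ : g.comp (coprod.inr D₁ D₂) = g'.comp (coprod.inr D₁ D₂)) : g = g' :=
  ofSurjective.hom_ext (Algebra.TensorProduct.ext h₁ h₂)

section Desc

variable {E : SmallDef A} (f₁ : D₁.B.carrier →ₐ[R] E.B.carrier)
  (f₂ : D₂.B.carrier →ₐ[R] E.B.carrier)

theorem π_comp_productMap (h₁ : E.π.comp f₁ = D₁.π) (h₂ : E.π.comp f₂ = D₂.π) :
    E.π.comp (productMap f₁ f₂) = productMap D₁.π D₂.π :=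
  Algebra.TensorProduct.ext' fun a b => by
    simp only [AlgHom.comp_apply, Algebra.TensorProduct.productMap_apply_tmul, map_mul,
      ← h₁, ← h₂]

def coprod.desc (h₁ : E.π.comp f₁ = D₁.π) (h₂ : E.π.comp f₂ = D₂.π) :
    (coprod D₁ D₂).B.carrier →ₐ[R] E.B.carrier :=
  ofSurjective.lift _ (π_comp_productMap f₁ f₂ h₁ h₂)

variable (h₁ : E.π.comp f₁ = D₁.π) (h₂ : E.π.comp f₂ = D₂.π)

theorem coprod.desc_comp_inl : (coprod.desc f₁ f₂ h₁ h₂).comp (coprod.inl D₁ D₂) = f₁ :=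
  AlgHom.ext (AlgHom.congr_fun (Algebra.TensorProduct.productMap_left f₁ f₂))

theorem coprod.desc_comp_inr : (coprod.desc f₁ f₂ h₁ h₂).comp (coprod.inr D₁ D₂) = f₂ :=
  AlgHom.ext (AlgHom.congr_fun (Algebra.TensorProduct.productMap_right f₁ f₂))

theorem coprod.π_comp_desc : E.π.comp (coprod.desc f₁ f₂ h₁ h₂) = (coprod D₁ D₂).π :=
  ofSurjective.π_comp_lift _ _

end Desc

theorem coprod_isVersal [Algebra.FinitePresentation R A.carrier] (h₁ : D₁.IsVersal)
    (h₂ : D₂.IsVersal) : (coprod D₁ D₂).IsVersal := by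
  have := h₁.1
  have := h₂.1
  have : Algebra.FinitePresentation R (D₁.B.carrier ⊗[R] D₂.B.carrier) :=
    .trans R D₁.B.carrier _
  refine ⟨ofSurjective_finitePresentation _, fun E w hw hwπ _ => ?_⟩
  obtain ⟨t₁, hwt₁, ht₁⟩ := h₁.exists_lift w hw hwπ _ (coprod.π_comp_inl D₁ D₂)
  obtain ⟨t₂, hwt₂, ht₂⟩ := h₂.exists_lift w hw hwπ _ (coprod.π_comp_inr D₁ D₂)
  have hπ := coprod.π_comp_desc t₁ t₂ ht₁ ht₂
  refine ⟨coprod.desc t₁ t₂ ht₁ ht₂, coprod.hom_ext ?_ ?_, hπ, aug_comp_eq_of_π_comp_eq hπ⟩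
  · rw [AlgHom.comp_assoc, coprod.desc_comp_inl, hwt₁, AlgHom.id_comp]
  · rw [AlgHom.comp_assoc, coprod.desc_comp_inr, hwt₂, AlgHom.id_comp]

end Coprod

end SmallDef

theorem statement19 (A : AugAlg R) (D₁ D₂ : SmallDef A)
    (h₁ : D₁.IsVersal) (h₂ : D₂.IsVersal)
    (hfg₁ : (RingHom.ker D₁.π.toRingHom).FG) :
    ∃ C : SmallDef A, C.IsVersal ∧
      ∃ (q₁ : C.B.carrier →ₐ[R] D₁.B.carrier) (q₂ : C.B.carrier →ₐ[R] D₂.B.carrier),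
        Function.Surjective q₁ ∧ Function.Surjective q₂ ∧
          D₁.π.comp q₁ = C.π ∧ D₂.π.comp q₂ = C.π ∧
          D₁.B.aug.comp q₁ = C.B.aug ∧ D₂.B.aug.comp q₂ = C.B.aug := by
  have := h₁.1
  have : Algebra.FinitePresentation R A.carrier := .of_surjective D₁.surj hfg₁
  obtain ⟨u, hu⟩ := h₁.exists_hom D₂
  obtain ⟨v, hv⟩ := h₂.exists_hom D₁
  have hq₁ := SmallDef.coprod.desc_comp_inl (AlgHom.id R _) v (AlgHom.comp_id _) hv
  have hq₂ := SmallDef.coprod.desc_comp_inr u (AlgHom.id R _) hu (AlgHom.comp_id _)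
  have hπ₁ := SmallDef.coprod.π_comp_desc (AlgHom.id R _) v (AlgHom.comp_id _) hv
  have hπ₂ := SmallDef.coprod.π_comp_desc u (AlgHom.id R _) hu (AlgHom.comp_id _)
  exact ⟨D₁.coprod D₂, SmallDef.coprod_isVersal h₁ h₂, _, _,
    fun b => ⟨SmallDef.coprod.inl D₁ D₂ b, AlgHom.congr_fun hq₁ b⟩,
    fun b => ⟨SmallDef.coprod.inr D₁ D₂ b, AlgHom.congr_fun hq₂ b⟩,
    hπ₁, hπ₂, SmallDef.aug_comp_eq_of_π_comp_eq hπ₁, SmallDef.aug_comp_eq_of_π_comp_eq hπ₂⟩
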